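/- arXiv:1704.04830 — 5 statements merged into one kernel-verified Lean document; each statement's English description precedes it below -/
import Mathlib

section
/- Let n ≥ 20 be an integer. Then π_{(n,n)}((1,1)) ≤ 2 · (sup_{t≥0} Pr_1^t[w(t) = n, MAX(w) = n, and MIN(w) ≥ 1]) · (Σ_{t≥0} Pr_1^t[w(t) = n, MAX(w) = n, and MIN(w) ≥ 1]), where the supremum and the (convergent) sum are over all nonnegative integers t. -/
/-! A grid walk from `(1, 1)` to `(n, n)` inside the box `{1,…,n}²` interleaves a horizontal and a
vertical walk of the same kind, so with `q s = Pr_1^s[w(s) = n, MAX(w) = n, MIN(w) ≥ 1]` one gets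
`N_t / 4^t ≤ ∑_{i+j=t} C(t,i) 2^{-t} q(i) q(j)`. Bounding `q(j)` by the supremum and summing
`∑_{t ≥ i} C(t,i) 2^{-t} = 2` gives the bound. The series `∑ q` converges because `q(s) / 2` is at
most the probability that a walk from `1` leaves `{1,…,n}` at time `s + 1`, through `n + 1`. -/

/-- A grid walk of length `t` from `v ∈ ℤ²`: a function on `{0,…,t}` starting at `v`
whose consecutive values differ by exactly `1` in `ℓ¹`-norm. -/
def IsGridWalk (v : ℤ × ℤ) (t : ℕ) (w : Fin (t + 1) → ℤ × ℤ) : Prop :=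
  w 0 = v ∧ ∀ j : Fin t,
    |(w j.succ).1 - (w j.castSucc).1| + |(w j.succ).2 - (w j.castSucc).2| = 1

/-- Membership in the box `B = {1,…,n}²`. -/
def InBox (n : ℕ) (p : ℤ × ℤ) : Prop :=
  1 ≤ p.1 ∧ p.1 ≤ (n : ℤ) ∧ 1 ≤ p.2 ∧ p.2 ≤ (n : ℤ)

/-- `N_t(v, u)`: the number of grid walks of length `t` from `v` staying in `B \ {u}`
before time `t` and ending at `u` at time `t`. -/
noncomputable def gridHitCount (n : ℕ) (v u : ℤ × ℤ) (t : ℕ) : ℕ :=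
  {w : Fin (t + 1) → ℤ × ℤ | IsGridWalk v t w ∧
    (∀ j : Fin t, InBox n (w j.castSucc) ∧ w j.castSucc ≠ u) ∧
    w (Fin.last t) = u}.ncard

/-- The potential `π_u(v) = Σ_{t ≥ 0} N_t(v,u) / 4^t`. -/
noncomputable def gridPotential (n : ℕ) (u v : ℤ × ℤ) : ℝ :=
  ∑' t : ℕ, (gridHitCount n v u t : ℝ) / 4 ^ t

/-- A 1D walk of length `t` started at `i`: a function on `{0,…,t}` starting at `i`
whose consecutive values differ by exactly `1`. -/
def IsWalk (i : ℤ) (t : ℕ) (w : Fin (t + 1) → ℤ) : Prop :=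
  w 0 = i ∧ ∀ j : Fin t, |w j.succ - w j.castSucc| = 1

/-- The number of walks of length `t` started at `i` satisfying `P`. -/
noncomputable def walkCount (i : ℤ) (t : ℕ) (P : (Fin (t + 1) → ℤ) → Prop) : ℕ :=
  {w : Fin (t + 1) → ℤ | IsWalk i t w ∧ P w}.ncard

/-- `Pr_i^t[P]`: the number of walks of length `t` started at `i` satisfying `P`,
divided by `2 ^ t`. -/
noncomputable def walkProb (i : ℤ) (t : ℕ) (P : (Fin (t + 1) → ℤ) → Prop) : ℝ :=
  (walkCount i t P : ℝ) / 2 ^ t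

/-- `w(t) = n`. -/
def endsAt {t : ℕ} (n : ℤ) (w : Fin (t + 1) → ℤ) : Prop := w (Fin.last t) = n

/-- `MAX(w) = n`. -/
def maxEq {t : ℕ} (n : ℤ) (w : Fin (t + 1) → ℤ) : Prop :=
  (∀ j, w j ≤ n) ∧ ∃ j, w j = n

/-- `MIN(w) ≥ m`. -/
def minGE {t : ℕ} (m : ℤ) (w : Fin (t + 1) → ℤ) : Prop := ∀ j, m ≤ w j

open Finset

section HittingWalks

variable {α : Type*} [AddCommGroup α]

def hitWalks (D : Finset α) (B : Set α) (u : α) (t : ℕ) (v : α) : Set (Fin (t + 1) → α) :=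
  {w | w 0 = v ∧ (∀ j : Fin t, w j.castSucc ∈ B ∧ w j.succ - w j.castSucc ∈ D) ∧
    w (Fin.last t) = u}

noncomputable def hitCount (D : Finset α) (B : Set α) (u : α) (t : ℕ) (v : α) : ℕ :=
  (hitWalks D B u t v).ncard

variable {D : Finset α} {B : Set α} {u v : α} {t : ℕ}

theorem hitCount_zero [DecidableEq α] : hitCount D B u 0 v = if v = u then 1 else 0 := by
  have hwalks : hitWalks D B u 0 v = {w | w 0 = v ∧ w 0 = u} := by
    simp [hitWalks, Fin.last]
  rw [hitCount, hwalks]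
  split_ifs with h
  · subst h
    exact Set.ncard_eq_one.2 ⟨fun _ => v, by ext w; simp [funext_iff, Fin.forall_fin_one]⟩
  · convert Set.ncard_empty (Fin 1 → α)
    exact Set.eq_empty_of_forall_notMem fun w hw => h (hw.1.symm.trans hw.2)

theorem hitWalks_succ_of_mem (hv : v ∈ B) :
    hitWalks D B u (t + 1) v = ⋃ d ∈ D, Fin.cons v '' hitWalks D B u t (v + d) := by
  ext w
  simp only [hitWalks, Set.mem_iUnion, Set.mem_image, Set.mem_ofPred_eq, Fin.forall_fin_succ,
    Fin.castSucc_zero, Fin.succ_zero_eq_one]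
  constructor
  · rintro ⟨h0, ⟨⟨-, hd⟩, hs⟩, hl⟩
    refine ⟨w 1 - v, by rwa [h0] at hd, Fin.tail w, ⟨(add_sub_cancel v (w 1)).symm,
      fun j => ?_, by simpa [Fin.tail] using hl⟩, by rw [← h0, Fin.cons_self_tail]⟩
    simpa only [Fin.tail, Fin.succ_castSucc] using hs j
  · rintro ⟨d, hd, w', ⟨h0, hs, hl⟩, rfl⟩
    refine ⟨rfl, ⟨⟨hv, by simpa [h0] using hd⟩, fun j => ?_⟩, by simpa [← Fin.succ_last] using hl⟩
    simpa only [← Fin.succ_castSucc, Fin.cons_succ] using hs j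

theorem hitWalks_succ_of_notMem (hv : v ∉ B) : hitWalks D B u (t + 1) v = ∅ := by
  ext w
  simp only [hitWalks, Set.mem_ofPred_eq, Set.mem_empty_iff_false, iff_false]
  rintro ⟨rfl, hs, -⟩
  exact hv (hs 0).1

theorem finite_hitWalks : (hitWalks D B u t v).Finite := by
  induction t generalizing v with
  | zero =>
    refine Set.Subsingleton.finite fun w hw w' hw' => funext fun i => ?_
    rw [Fin.fin_one_eq_zero i, hw.1, hw'.1]
  | succ t ih =>
    by_cases hv : v ∈ B
    · rw [hitWalks_succ_of_mem hv]
      exact D.finite_toSet.biUnion fun d _ => ih.image _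
    · simp [hitWalks_succ_of_notMem hv]

theorem hitCount_succ_of_mem (hv : v ∈ B) :
    hitCount D B u (t + 1) v = ∑ d ∈ D, hitCount D B u t (v + d) := by
  rw [hitCount, hitWalks_succ_of_mem hv, ← set_biUnion_coe, D.finite_toSet.ncard_biUnion
    (fun d _ => finite_hitWalks.image _), finsum_mem_coe_finset]
  · exact sum_congr rfl fun d _ =>
      Set.ncard_image_of_injective _ (Fin.cons_right_injective (α := fun _ => α) v)
  · intro d _ d' _ hne
    refine Set.disjoint_left.2 ?_
    rintro _ ⟨w, hw, rfl⟩ ⟨w', hw', hww'⟩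
    obtain rfl := Fin.cons_right_injective (α := fun _ => α) v hww'
    exact hne (add_left_cancel (hw.1.symm.trans hw'.1))

theorem hitCount_succ_of_notMem (hv : v ∉ B) : hitCount D B u (t + 1) v = 0 := by
  simp [hitCount, hitWalks_succ_of_notMem hv]

theorem hitCount_le_hitCount_add_succ (hu : u ∈ B) {d₀ : α} (hd₀ : d₀ ∈ D) :
    hitCount D B u t v ≤ hitCount D B (u + d₀) (t + 1) v := by
  classical
  induction t generalizing v with
  | zero =>
    rw [hitCount_zero]
    split_ifs with h
    · subst h
      rw [hitCount_succ_of_mem hu]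
      calc 1 = hitCount D B (v + d₀) 0 (v + d₀) := by rw [hitCount_zero, if_pos rfl]
        _ ≤ _ := single_le_sum (f := fun d => hitCount D B (v + d₀) 0 (v + d))
          (fun _ _ => Nat.zero_le _) hd₀
    · exact Nat.zero_le _
  | succ t ih =>
    by_cases hv : v ∈ B
    · rw [hitCount_succ_of_mem hv, hitCount_succ_of_mem hv]
      exact sum_le_sum fun d _ => ih
    · simp [hitCount_succ_of_notMem hv]

theorem sum_hitCount_div_pow_le_one (hu : u ∉ B) (M : ℕ) :
    ∑ s ∈ range M, (hitCount D B u s v : ℝ) / (#D : ℝ) ^ s ≤ 1 := by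
  classical
  induction M generalizing v with
  | zero => simp
  | succ M ih =>
    rw [sum_range_succ', hitCount_zero, pow_zero, div_one]
    by_cases hv : v ∈ B
    · have hvu : v ≠ u := fun h => hu (h ▸ hv)
      calc ∑ s ∈ range M, (hitCount D B u (s + 1) v : ℝ) / #D ^ (s + 1) +
            ((if v = u then 1 else 0 : ℕ) : ℝ)
          = (∑ d ∈ D, ∑ s ∈ range M, (hitCount D B u s (v + d) : ℝ) / #D ^ s) / #D := by
            simp only [hitCount_succ_of_mem hv, if_neg hvu, Nat.cast_sum, sum_div, pow_succ,
              ← div_div, Nat.cast_zero, add_zero]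
            exact sum_comm
        _ ≤ (∑ _d ∈ D, (1 : ℝ)) / #D := by gcongr with d; exact ih
        _ ≤ 1 := by simpa using div_self_le_one (#D : ℝ)
    · simp only [hitCount_succ_of_notMem hv, Nat.cast_zero, zero_div, sum_const_zero, zero_add]
      split_ifs <;> norm_num

theorem sum_hitCount_div_pow_le_card (hu : u ∈ B) {d₀ : α} (hd₀ : d₀ ∈ D) (hexit : u + d₀ ∉ B)
    (M : ℕ) : ∑ s ∈ range M, (hitCount D B u s v : ℝ) / (#D : ℝ) ^ s ≤ #D := by
  have hD : (0 : ℝ) < #D := by exact_mod_cast card_pos.2 ⟨d₀, hd₀⟩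
  calc ∑ s ∈ range M, (hitCount D B u s v : ℝ) / #D ^ s
      ≤ ∑ s ∈ range M, #D * ((hitCount D B (u + d₀) (s + 1) v : ℝ) / #D ^ (s + 1)) := by
        gcongr with s
        rw [pow_succ, ← div_div, mul_div_cancel₀ _ hD.ne']
        gcongr
        exact_mod_cast hitCount_le_hitCount_add_succ hu hd₀
    _ ≤ #D * ∑ s ∈ range (M + 1), (hitCount D B (u + d₀) s v : ℝ) / #D ^ s := by
        rw [← mul_sum, sum_range_succ' _ M]
        gcongr
        exact le_add_of_nonneg_right (by positivity)
    _ ≤ #D := mul_le_of_le_one_right hD.le (sum_hitCount_div_pow_le_one hexit _)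

theorem hitCount_prod_le {β : Type*} [AddCommGroup β] [DecidableEq α] [DecidableEq β]
    (D₁ : Finset α) (D₂ : Finset β) (B₁ : Set α) (B₂ : Set β) (u₁ : α) (u₂ : β) (t : ℕ)
    (a : α) (b : β) :
    hitCount (D₁ ×ˢ {0} ∪ {0} ×ˢ D₂) (B₁ ×ˢ B₂) (u₁, u₂) t (a, b) ≤
      ∑ ij ∈ antidiagonal t,
        t.choose ij.1 * (hitCount D₁ B₁ u₁ ij.1 a * hitCount D₂ B₂ u₂ ij.2 b) := by
  induction t generalizing a b with
  | zero => simp only [hitCount_zero, Prod.ext_iff, ite_and]; split_ifs <;> simp_all [hitCount_zero]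
  | succ t ih =>
    by_cases hab : (a, b) ∈ B₁ ×ˢ B₂
    · have ⟨ha, hb⟩ := hab
      have hpascal := sum_antidiagonal_choose_succ_mul (R := ℕ)
        (fun i j => hitCount D₁ B₁ u₁ i a * hitCount D₂ B₂ u₂ j b) t
      simp only [Nat.cast_id] at hpascal
      rw [hitCount_succ_of_mem hab, hpascal, add_comm]
      set c := hitCount (D₁ ×ˢ {0} ∪ {0} ×ˢ D₂) (B₁ ×ˢ B₂) (u₁, u₂) t
      calc ∑ d ∈ D₁ ×ˢ {0} ∪ {0} ×ˢ D₂, c ((a, b) + d)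
          ≤ ∑ d ∈ D₁ ×ˢ {0}, c ((a, b) + d) + ∑ d ∈ {0} ×ˢ D₂, c ((a, b) + d) :=
            sum_union_inter (f := fun d => c ((a, b) + d)) ▸ Nat.le_add_right _ _
        _ = ∑ d ∈ D₁, c (a + d, b) + ∑ d ∈ D₂, c (a, b + d) := by simp
        _ ≤ ∑ d ∈ D₁, ∑ ij ∈ antidiagonal t,
                t.choose ij.1 * (hitCount D₁ B₁ u₁ ij.1 (a + d) * hitCount D₂ B₂ u₂ ij.2 b) +
              ∑ d ∈ D₂, ∑ ij ∈ antidiagonal t,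
                t.choose ij.1 * (hitCount D₁ B₁ u₁ ij.1 a * hitCount D₂ B₂ u₂ ij.2 (b + d)) := by
            gcongr <;> apply ih
        _ = _ := by
            rw [sum_comm, sum_comm (s := D₂)]
            congr 1
            · refine sum_congr rfl fun ij hij => ?_
              rw [hitCount_succ_of_mem ha, Nat.choose_symm_of_eq_add (mem_antidiagonal.1 hij).symm,
                sum_mul, mul_sum]
            · refine sum_congr rfl fun ij _ => ?_
              rw [hitCount_succ_of_mem hb, mul_sum, mul_sum]
    · simp [hitCount_succ_of_notMem hab]

end HittingWalks

theorem hasSum_choose_div_two_pow (i : ℕ) :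
    HasSum (fun j : ℕ => ((i + j).choose i : ℝ) / 2 ^ (i + j)) 2 := by
  have h := (hasSum_choose_mul_geometric_of_norm_lt_one (𝕜 := ℝ) i
    (r := 1 / 2) (by norm_num)).mul_left ((1 / 2) ^ i)
  have hvalue : (1 / 2 : ℝ) ^ i * (1 / (1 - 1 / 2) ^ (i + 1)) = 2 := by
    rw [show (1 : ℝ) - 1 / 2 = 1 / 2 by norm_num, pow_succ]
    field_simp
  rw [hvalue] at h
  refine h.congr_fun fun j => ?_
  rw [add_comm j, pow_add, one_div_pow, one_div_pow]
  field_simp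

theorem hasSum_sum_antidiagonal_choose_div_mul {q : ℕ → ℝ} (hq0 : ∀ i, 0 ≤ q i)
    (hq : Summable q) :
    HasSum (fun t => ∑ ij ∈ antidiagonal t, (t.choose ij.1 : ℝ) / 2 ^ t * q ij.1)
      (2 * ∑' i, q i) := by
  set f : ℕ × ℕ → ℝ := fun ij => ((ij.1 + ij.2).choose ij.1 : ℝ) / 2 ^ (ij.1 + ij.2) * q ij.1
  have hfiber (i : ℕ) : HasSum (fun j => f (i, j)) (2 * q i) :=
    (hasSum_choose_div_two_pow i).mul_right (q i)
  have hf : HasSum f (2 * ∑' i, q i) := by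
    have hfs : Summable f := (summable_prod_of_nonneg fun ij => by positivity [hq0 ij.1]).2
      ⟨fun i => (hfiber i).summable, by simpa only [(hfiber _).tsum_eq] using hq.mul_left 2⟩
    convert hfs.hasSum using 1
    exact (hq.hasSum.mul_left 2).unique (hfs.hasSum.prod_fiberwise hfiber)
  have hsigma := (HasAntidiagonal.sigmaAntidiagonalEquivProd.hasSum_iff.2 hf).sigma
    fun t => hasSum_fintype _
  refine hsigma.congr_fun fun t => ?_
  rw [← sum_coe_sort]
  refine sum_congr rfl fun ij _ => ?_
  simp [f, mem_antidiagonal.1 ij.2]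

theorem tsum_le_two_mul_iSup_mul_tsum {p q : ℕ → ℝ} (hp0 : ∀ t, 0 ≤ p t) (hq0 : ∀ i, 0 ≤ q i)
    (hq : Summable q)
    (hpq : ∀ t, p t ≤ ∑ ij ∈ antidiagonal t, (t.choose ij.1 : ℝ) / 2 ^ t * (q ij.1 * q ij.2)) :
    ∑' t, p t ≤ 2 * (⨆ i, q i) * ∑' i, q i := by
  have hle_sup (i : ℕ) : q i ≤ ⨆ i, q i :=
    le_ciSup ⟨∑' i, q i, by rintro _ ⟨i, rfl⟩; exact hq.le_tsum i fun j _ => hq0 j⟩ i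
  have hmajorant := (hasSum_sum_antidiagonal_choose_div_mul hq0 hq).mul_left (⨆ i, q i)
  have hbound (t : ℕ) : p t ≤
      (⨆ i, q i) * ∑ ij ∈ antidiagonal t, (t.choose ij.1 : ℝ) / 2 ^ t * q ij.1 := by
    calc p t ≤ ∑ ij ∈ antidiagonal t, (t.choose ij.1 : ℝ) / 2 ^ t * (q ij.1 * q ij.2) := hpq t
      _ ≤ ∑ ij ∈ antidiagonal t, (t.choose ij.1 : ℝ) / 2 ^ t * (q ij.1 * ⨆ i, q i) := by
          gcongr with ij
          · exact hq0 _
          · exact hle_sup _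
      _ = _ := by rw [mul_sum]; exact sum_congr rfl fun ij _ => by ring
  calc ∑' t, p t
      ≤ ∑' t, (⨆ i, q i) * ∑ ij ∈ antidiagonal t, (t.choose ij.1 : ℝ) / 2 ^ t * q ij.1 :=
        (Summable.of_nonneg_of_le hp0 hbound hmajorant.summable).tsum_le_tsum hbound
          hmajorant.summable
    _ = (⨆ i, q i) * (2 * ∑' i, q i) := hmajorant.tsum_eq
    _ = 2 * (⨆ i, q i) * ∑' i, q i := by ring

def unitSteps : Finset ℤ := {1, -1}

def gridSteps : Finset (ℤ × ℤ) := unitSteps ×ˢ {0} ∪ {0} ×ˢ unitSteps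

theorem abs_eq_one_iff_mem_unitSteps (x : ℤ) : |x| = 1 ↔ x ∈ unitSteps := by
  simp [unitSteps, abs_eq zero_le_one]

theorem abs_add_abs_eq_one_iff_mem_gridSteps (x y : ℤ) : |x| + |y| = 1 ↔ (x, y) ∈ gridSteps := by
  simp only [gridSteps, ← abs_eq_one_iff_mem_unitSteps, mem_union, mem_product, mem_singleton]
  rcases abs_cases x with ⟨hx, hx'⟩ | ⟨hx, hx'⟩ <;>
    rcases abs_cases y with ⟨hy, hy'⟩ | ⟨hy, hy'⟩ <;> simp only [hx, hy] <;> omega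

theorem walkCount_good_eq_hitCount {n : ℕ} (hn : 1 ≤ n) (s : ℕ) :
    walkCount 1 s (fun w => endsAt (n : ℤ) w ∧ maxEq (n : ℤ) w ∧ minGE 1 w) =
      hitCount unitSteps (Set.Icc 1 (n : ℤ)) n s 1 := by
  unfold walkCount hitCount
  congr 1
  ext w
  simp only [Set.mem_ofPred_eq, hitWalks, IsWalk, abs_eq_one_iff_mem_unitSteps, endsAt, maxEq,
    minGE, Set.mem_Icc]
  constructor
  · rintro ⟨⟨h0, hstep⟩, hlast, ⟨hle, -⟩, hge⟩
    exact ⟨h0, fun j => ⟨⟨hge _, hle _⟩, hstep j⟩, hlast⟩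
  · rintro ⟨h0, hs, hlast⟩
    have hbounds : ∀ j, 1 ≤ w j ∧ w j ≤ n :=
      Fin.forall_fin_succ'.2
        ⟨fun j => (hs j).1, by rw [hlast]; exact ⟨by exact_mod_cast hn, le_rfl⟩⟩
    exact ⟨⟨h0, fun j => (hs j).2⟩, hlast, ⟨fun j => (hbounds j).2, _, hlast⟩,
      fun j => (hbounds j).1⟩

theorem summable_hitCount_unitSteps_div_two_pow {n : ℕ} (hn : 1 ≤ n) :
    Summable fun s => (hitCount unitSteps (Set.Icc 1 (n : ℤ)) n s 1 : ℝ) / 2 ^ s := by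
  refine summable_of_sum_range_le (c := 2) (fun s => by positivity) fun M => ?_
  have hcard : #unitSteps = 2 := rfl
  have hexit := sum_hitCount_div_pow_le_card (v := 1) (B := Set.Icc 1 (n : ℤ))
    (⟨by omega, le_rfl⟩ : (n : ℤ) ∈ Set.Icc 1 (n : ℤ)) (show (1 : ℤ) ∈ unitSteps by decide)
    (by simp) M
  rwa [hcard, Nat.cast_ofNat] at hexit

theorem gridHitCount_le_hitCount (n t : ℕ) (u v : ℤ × ℤ) :
    gridHitCount n v u t ≤ hitCount gridSteps (Set.Icc 1 (n : ℤ) ×ˢ Set.Icc 1 (n : ℤ)) u t v := by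
  refine Set.ncard_le_ncard (fun w ⟨⟨h0, hstep⟩, hbox, hlast⟩ => ⟨h0, fun j => ⟨?_, ?_⟩, hlast⟩)
    finite_hitWalks
  · obtain ⟨h1, h2, h3, h4⟩ := (hbox j).1
    exact ⟨⟨h1, h2⟩, h3, h4⟩
  · exact (abs_add_abs_eq_one_iff_mem_gridSteps _ _).1 (hstep j)

theorem gridHitCount_div_four_pow_le (n t : ℕ) :
    (gridHitCount n (1, 1) (n, n) t : ℝ) / 4 ^ t ≤
      ∑ ij ∈ antidiagonal t, (t.choose ij.1 : ℝ) / 2 ^ t *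
        ((hitCount unitSteps (Set.Icc 1 (n : ℤ)) n ij.1 1 : ℝ) / 2 ^ ij.1 *
          ((hitCount unitSteps (Set.Icc 1 (n : ℤ)) n ij.2 1 : ℝ) / 2 ^ ij.2)) := by
  have hcount := (gridHitCount_le_hitCount n t (n, n) (1, 1)).trans
    (hitCount_prod_le unitSteps unitSteps _ _ (n : ℤ) (n : ℤ) t 1 1)
  calc (gridHitCount n (1, 1) (n, n) t : ℝ) / 4 ^ t
      ≤ (∑ ij ∈ antidiagonal t, t.choose ij.1 *
          (hitCount unitSteps (Set.Icc 1 (n : ℤ)) n ij.1 1 *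
            hitCount unitSteps (Set.Icc 1 (n : ℤ)) n ij.2 1) : ℕ) / 4 ^ t :=
        div_le_div_of_nonneg_right (by exact_mod_cast hcount) (by positivity)
    _ = _ := by
        push_cast
        rw [sum_div]
        refine sum_congr rfl fun ij hij => ?_
        rw [← mem_antidiagonal.1 hij, show (4 : ℝ) = 2 * 2 by norm_num, mul_pow, pow_add]
        field_simp

/-- For `n ≥ 20`,
`π_{(n,n)}((1,1)) ≤ 2 · (sup_t Pr_1^t[w(t)=n, MAX=n, MIN ≥ 1]) · (Σ_t Pr_1^t[w(t)=n, MAX=n, MIN ≥ 1])`. -/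
theorem potential_le_sup_mul_tsum (n : ℕ) (hn : 20 ≤ n) :
    gridPotential n ((n : ℤ), (n : ℤ)) (1, 1) ≤
      2 * (⨆ t : ℕ, walkProb 1 t
            (fun w => endsAt (n : ℤ) w ∧ maxEq (n : ℤ) w ∧ minGE 1 w)) *
        ∑' t : ℕ, walkProb 1 t
            (fun w => endsAt (n : ℤ) w ∧ maxEq (n : ℤ) w ∧ minGE 1 w) := by
  set q : ℕ → ℝ := fun s => (hitCount unitSteps (Set.Icc 1 (n : ℤ)) n s 1 : ℝ) / 2 ^ s
  have hwalkProb (s : ℕ) :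
      walkProb 1 s (fun w => endsAt (n : ℤ) w ∧ maxEq (n : ℤ) w ∧ minGE 1 w) = q s := by
    rw [walkProb, walkCount_good_eq_hitCount (by omega)]
  simp only [hwalkProb]
  exact tsum_le_two_mul_iSup_mul_tsum (fun t => by positivity) (fun s => by positivity)
    (summable_hitCount_unitSteps_div_two_pow (by omega)) (gridHitCount_div_four_pow_le n)
end

section
/- For every positive integer n, √(2π) ≤ n! / (√n · (n/e)^n) ≤ e, where e is Euler's number. -/
open Real Stirling Topology Filter

lemma stirling_key (n : ℕ) (hn : 0 < n) :
    (n.factorial : ℝ) / (Real.sqrt n * ((n : ℝ) / Real.exp 1) ^ n)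
      = Real.sqrt 2 * stirlingSeq n := by
  rw [stirlingSeq, Real.sqrt_mul (by norm_num : (0:ℝ) ≤ 2)]
  have h1 : (0:ℝ) < Real.sqrt n := Real.sqrt_pos.mpr (by exact_mod_cast hn)
  have h2 : (0:ℝ) < ((n : ℝ) / Real.exp 1) ^ n := by positivity
  field_simp

lemma sqrt_pi_le_stirling (n : ℕ) (hn : 0 < n) : Real.sqrt π ≤ stirlingSeq n := by
  obtain ⟨m, rfl⟩ := Nat.exists_eq_add_of_lt hn
  have ht : Tendsto (stirlingSeq ∘ Nat.succ) atTop (𝓝 (Real.sqrt π)) :=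
    (Filter.tendsto_add_atTop_iff_nat 1).mpr tendsto_stirlingSeq_sqrt_pi
  have := stirlingSeq'_antitone.le_of_tendsto ht (0 + m)
  simpa [Function.comp, Nat.succ_eq_add_one, Nat.add_comm, Nat.add_assoc] using this

lemma stirling_le (n : ℕ) (hn : 0 < n) : stirlingSeq n ≤ Real.exp 1 / Real.sqrt 2 := by
  obtain ⟨m, rfl⟩ := Nat.exists_eq_add_of_lt hn
  have h := stirlingSeq'_antitone (Nat.zero_le (0 + m))
  simp only [Function.comp, Nat.succ_eq_add_one] at h
  rw [stirlingSeq_one] at h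
  simpa using h

/-- **Stirling's approximation.** For every positive integer `n`,
`√(2π) ≤ n! / (√n · (n/e)^n) ≤ e`. -/
theorem stirling_bounds (n : ℕ) (hn : 0 < n) :
    Real.sqrt (2 * Real.pi) ≤
        (n.factorial : ℝ) / (Real.sqrt n * ((n : ℝ) / Real.exp 1) ^ n) ∧
      (n.factorial : ℝ) / (Real.sqrt n * ((n : ℝ) / Real.exp 1) ^ n) ≤ Real.exp 1 := by
  rw [stirling_key n hn]
  have h2 : (0:ℝ) < Real.sqrt 2 := by positivity
  constructor
  · rw [Real.sqrt_mul (by norm_num)]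
    exact mul_le_mul_of_nonneg_left (sqrt_pi_le_stirling n hn) (Real.sqrt_nonneg 2)
  · calc Real.sqrt 2 * stirlingSeq n ≤ Real.sqrt 2 * (Real.exp 1 / Real.sqrt 2) :=
          mul_le_mul_of_nonneg_left (stirling_le n hn) h2.le
      _ = Real.exp 1 := by field_simp
end

section
/- Let c be a positive real number and n a positive integer with c·√n < n. Then for every natural number k with (n − c√n)/2 ≤ k ≤ (n + c√n)/2, the binomial coefficient satisfies C(n, k) ≥ e^{−1−c²} · 2^n/√n, where e is Euler's number. -/
/-!
Put `d = 2k - n`, so that `d² ≤ c²n`. Walking from the middle of the row towards `k`, each ratio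
`C(n, j) / C(n, j + 1) = (j + 1) / (n - j)` is at most `exp ((2j + 1 - n) / G)` once
`G² ≤ (n - j)(j + 1)`, because the logarithmic mean of two numbers dominates their geometric
mean. These exponents telescope to at most `d² / 4`, and `G = n / 4` is admissible while
`4d² ≤ 3n²`; hence `C(n, ⌊n/2⌋) ≤ e^{c²} C(n, k)`, and the Wallis-type bound
`2ⁿ ≤ 2√n C(n, ⌊n/2⌋)` together with `e ≥ 2` gives the claim. When `4c² > 3n` the right-hand
side is below `1`, as `2 < e^{3/4}`.
-/

open Real

theorem Real.log_sub_log_le_div_sqrt_mul {a b : ℝ} (ha : 0 < a) (hab : a ≤ b) :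
    log b - log a ≤ (b - a) / √(a * b) := by
  have hb : 0 < b := ha.trans_le hab
  have hsa : 0 < √a := sqrt_pos.2 ha
  have hsb : 0 < √b := sqrt_pos.2 hb
  have hy : 0 ≤ log (√b / √a) :=
    log_nonneg ((one_le_div hsa).2 (sqrt_le_sqrt hab))
  have hlog : log (√b / √a) = (log b - log a) / 2 := by
    rw [log_div hsb.ne' hsa.ne', log_sqrt ha.le, log_sqrt hb.le]
    ring
  have hsinh : sinh (log (√b / √a)) = (b - a) / √(a * b) / 2 := by
    rw [sinh_log (div_pos hsb hsa), sqrt_mul ha.le]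
    field_simp
    rw [sq_sqrt ha.le, sq_sqrt hb.le]
  linarith [self_le_sinh_iff.2 hy]

theorem Real.exp_neg_one_sub_sq_mul_two_pow_le_one {c : ℝ} {n : ℕ} (hc : 3 * n ≤ 4 * c ^ 2) :
    exp (-1 - c ^ 2) * 2 ^ n ≤ 1 := by
  have h2 : (2 : ℝ) ^ n ≤ exp (3 / 4 * n) := by
    rw [mul_comm, exp_nat_mul, ← exp_log (two_pos : (0 : ℝ) < 2)]
    gcongr
    linarith [log_two_lt_d9]
  calc exp (-1 - c ^ 2) * 2 ^ n ≤ exp (-1 - c ^ 2) * exp (3 / 4 * n) := by gcongr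
    _ = exp (-1 - c ^ 2 + 3 / 4 * n) := (exp_add _ _).symm
    _ ≤ 1 := exp_le_one_iff.2 (by linarith)

namespace Nat

theorem four_pow_sq_le_four_mul_mul_centralBinom_sq {m : ℕ} (hm : 0 < m) :
    (4 ^ m) ^ 2 ≤ 4 * m * m.centralBinom ^ 2 := by
  induction m, hm using Nat.le_induction with
  | base => decide
  | succ m _ ih =>
    have hrec := succ_mul_centralBinom_succ m
    have key : (m + 1) ^ 2 * ((4 ^ (m + 1)) ^ 2) ≤
        (m + 1) ^ 2 * (4 * (m + 1) * (m + 1).centralBinom ^ 2) := by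
      calc (m + 1) ^ 2 * ((4 ^ (m + 1)) ^ 2) = 16 * (m + 1) ^ 2 * (4 ^ m) ^ 2 := by ring
        _ ≤ 16 * (m + 1) ^ 2 * (4 * m * m.centralBinom ^ 2) := by gcongr
        _ ≤ 16 * (m + 1) * (2 * m + 1) ^ 2 * m.centralBinom ^ 2 := by
          have : 4 * m * (m + 1) ≤ (2 * m + 1) ^ 2 := by nlinarith
          calc 16 * (m + 1) ^ 2 * (4 * m * m.centralBinom ^ 2)
              = 16 * (m + 1) * (4 * m * (m + 1)) * m.centralBinom ^ 2 := by ring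
            _ ≤ _ := by gcongr
        _ = 4 * (m + 1) * (2 * (2 * m + 1) * m.centralBinom) ^ 2 := by ring
        _ = (m + 1) ^ 2 * (4 * (m + 1) * (m + 1).centralBinom ^ 2) := by
          rw [← hrec]
          ring
    exact Nat.le_of_mul_le_mul_left key (by positivity)

theorem four_pow_le_four_mul_mul_choose_half_sq {n : ℕ} (hn : 0 < n) :
    4 ^ n ≤ 4 * n * n.choose (n / 2) ^ 2 := by
  obtain ⟨m, rfl | rfl⟩ := n.even_or_odd'
  · have hm : 0 < m := by omega
    rw [Nat.mul_div_cancel_left m two_pos, ← centralBinom_eq_two_mul_choose, pow_mul]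
    calc (4 ^ 2) ^ m = (4 ^ m) ^ 2 := by rw [← pow_mul, ← pow_mul, mul_comm]
      _ ≤ 4 * m * m.centralBinom ^ 2 := four_pow_sq_le_four_mul_mul_centralBinom_sq hm
      _ ≤ 4 * (2 * m) * m.centralBinom ^ 2 := by gcongr; omega
  · have hhalf : (2 * m + 1) / 2 = m := by omega
    have hcb : (m + 1).centralBinom = 2 * (2 * m + 1).choose m := by
      rw [centralBinom_eq_two_mul_choose, show 2 * (m + 1) = 2 * m + 1 + 1 by ring,
        choose_succ_succ', choose_symm_half]
      ring
    have h := four_pow_sq_le_four_mul_mul_centralBinom_sq (m.succ_pos)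
    rw [hcb] at h
    rw [hhalf]
    refine Nat.le_of_mul_le_mul_left ?_ (show 0 < 4 by norm_num)
    calc 4 * 4 ^ (2 * m + 1) = (4 ^ (m + 1)) ^ 2 := by ring
      _ ≤ 4 * (m + 1) * (2 * (2 * m + 1).choose m) ^ 2 := h
      _ = 4 * (4 * (m + 1) * (2 * m + 1).choose m ^ 2) := by ring
      _ ≤ 4 * (4 * (2 * m + 1) * (2 * m + 1).choose m ^ 2) := by gcongr; omega

theorem choose_le_choose_succ_mul_exp {n j : ℕ} {G : ℝ} (hG : 0 < G) (hjn : j < n)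
    (hnj : n ≤ 2 * j + 1) (hG2 : G ^ 2 ≤ ((n : ℝ) - j) * (j + 1)) :
    (n.choose j : ℝ) ≤ n.choose (j + 1) * exp ((2 * j + 1 - n) / G) := by
  have ha : (0 : ℝ) < n - j := by
    have : (j : ℝ) < n := by exact_mod_cast hjn
    linarith
  have hab : (n : ℝ) - j ≤ j + 1 := by
    have : (n : ℝ) ≤ 2 * j + 1 := by exact_mod_cast hnj
    linarith
  have hrec : (n.choose (j + 1) : ℝ) * (j + 1) = n.choose j * (n - j) := by
    have h : ((n.choose (j + 1) * (j + 1) : ℕ) : ℝ) = ((n.choose j * (n - j) : ℕ) : ℝ) := by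
      rw [choose_succ_right_eq]
    push_cast [Nat.cast_sub hjn.le] at h
    exact h
  have hlog := log_sub_log_le_div_sqrt_mul ha hab
  have hsqrt : G ≤ √(((n : ℝ) - j) * (j + 1)) := le_sqrt_of_sq_le hG2
  have hratio : (j + 1 : ℝ) / (n - j) ≤ exp ((2 * j + 1 - n) / G) := by
    have hj : (0 : ℝ) < j + 1 := by positivity
    have := exp_le_exp.2 (hlog.trans (div_le_div_of_nonneg_left (by linarith) hG hsqrt))
    rwa [exp_sub, exp_log hj, exp_log ha,
      show (j + 1 - (n - j) : ℝ) = 2 * j + 1 - n by ring] at this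
  calc (n.choose j : ℝ) = n.choose (j + 1) * ((j + 1) / (n - j)) := by
        field_simp
        linarith
    _ ≤ n.choose (j + 1) * exp ((2 * j + 1 - n) / G) :=
        mul_le_mul_of_nonneg_left hratio (Nat.cast_nonneg _)

theorem choose_le_choose_mul_exp {n m k : ℕ} {G : ℝ} (hG : 0 < G) (hnm : n ≤ 2 * m + 1)
    (hmk : m ≤ k) (hkn : k ≤ n) (hG2 : 4 * G ^ 2 ≤ ((n : ℝ) + 1) ^ 2 - (2 * k - n) ^ 2) :
    (n.choose m : ℝ) ≤ n.choose k * exp (((k : ℝ) - m) * (k + m - n) / G) := by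
  induction k, hmk using Nat.le_induction with
  | base => simp
  | succ k hmk ih =>
    have hnk : (n : ℝ) ≤ 2 * k + 1 := by exact_mod_cast hnm.trans (by omega)
    push_cast at hG2 ⊢
    have hstep := choose_le_choose_succ_mul_exp hG (n := n) (j := k) (by omega) (by omega)
      (by nlinarith)
    calc (n.choose m : ℝ) ≤ n.choose k * exp (((k : ℝ) - m) * (k + m - n) / G) :=
          ih (by omega) (by nlinarith)
      _ ≤ n.choose (k + 1) * exp ((2 * k + 1 - n) / G) *
            exp (((k : ℝ) - m) * (k + m - n) / G) :=
          mul_le_mul_of_nonneg_right hstep (exp_nonneg _)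
      _ = n.choose (k + 1) * exp (((k : ℝ) + 1 - m) * (k + 1 + m - n) / G) := by
          rw [mul_assoc, ← exp_add]
          congr 2
          ring

theorem choose_half_le_choose_mul_exp {n k : ℕ} (hn : 0 < n) (hkn : k ≤ n)
    (hd : 4 * ((2 : ℝ) * k - n) ^ 2 ≤ 3 * n ^ 2) :
    (n.choose (n / 2) : ℝ) ≤ n.choose k * exp ((2 * k - n) ^ 2 / n) := by
  wlog hnk : n ≤ 2 * k generalizing k
  · have hsub : ((n - k : ℕ) : ℝ) = n - k := Nat.cast_sub hkn
    have hsymm := this (k := n - k) (n.sub_le k) (by rw [hsub]; linarith) (by omega)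
    rwa [choose_symm hkn, hsub, show (2 * ((n : ℝ) - k) - n) ^ 2 = (2 * k - n) ^ 2 by ring]
      at hsymm
  have hnR : (0 : ℝ) < n := by exact_mod_cast hn
  have hexp :
      ((k : ℝ) - (n / 2 : ℕ)) * (k + (n / 2 : ℕ) - n) / (n / 4) ≤ (2 * k - n) ^ 2 / n := by
    rw [div_le_div_iff₀ (by positivity) hnR]
    nlinarith [mul_nonneg (sq_nonneg (2 * ((n / 2 : ℕ) : ℝ) - n)) hnR.le]
  calc (n.choose (n / 2) : ℝ)
      ≤ n.choose k * exp (((k : ℝ) - (n / 2 : ℕ)) * (k + (n / 2 : ℕ) - n) / (n / 4)) :=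
        choose_le_choose_mul_exp (by positivity) (by omega) (by omega) hkn (by nlinarith)
    _ ≤ n.choose k * exp ((2 * k - n) ^ 2 / n) := by gcongr

theorem two_pow_le_two_mul_sqrt_mul_choose_half {n : ℕ} (hn : 0 < n) :
    (2 : ℝ) ^ n ≤ 2 * √n * n.choose (n / 2) := by
  have h : ((4 ^ n : ℕ) : ℝ) ≤ ((4 * n * n.choose (n / 2) ^ 2 : ℕ) : ℝ) := by
    exact_mod_cast four_pow_le_four_mul_mul_choose_half_sq hn
  refine le_of_pow_le_pow_left₀ two_ne_zero (by positivity) ?_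
  rw [mul_pow, mul_pow, sq_sqrt n.cast_nonneg, ← pow_mul, mul_comm n, pow_mul]
  push_cast at h
  linarith

theorem exp_neg_one_sub_sq_mul_two_pow_le_choose_mul_sqrt {c : ℝ} {n k : ℕ} (hn : 0 < n)
    (hkn : k ≤ n) (hd : ((2 : ℝ) * k - n) ^ 2 ≤ c ^ 2 * n) (hc : 4 * c ^ 2 ≤ 3 * n) :
    exp (-1 - c ^ 2) * 2 ^ n ≤ n.choose k * √n := by
  have hmid := choose_half_le_choose_mul_exp hn hkn (by nlinarith)
  have hexp : exp ((2 * k - n) ^ 2 / n) ≤ exp (c ^ 2) :=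
    exp_le_exp.2 (div_le_of_le_mul₀ n.cast_nonneg (sq_nonneg c) hd)
  have he : 2 * exp (-1) ≤ 1 := by
    rw [exp_neg, ← div_eq_mul_inv, div_le_one (exp_pos 1)]
    linarith [add_one_le_exp 1]
  calc exp (-1 - c ^ 2) * 2 ^ n ≤ exp (-1 - c ^ 2) * (2 * √n * n.choose (n / 2)) := by
        gcongr; exact two_pow_le_two_mul_sqrt_mul_choose_half hn
    _ ≤ exp (-1 - c ^ 2) * (2 * √n * (n.choose k * exp (c ^ 2))) := by
        gcongr; exact hmid.trans (by gcongr)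
    _ = 2 * exp (-1) * (n.choose k * √n) := by
        rw [sub_eq_add_neg, exp_add, exp_neg (c ^ 2)]
        field_simp
    _ ≤ n.choose k * √n := mul_le_of_le_one_left (by positivity) he

end Nat

theorem central_binomial_lower_bound_general (c : ℝ) (n : ℕ) (hn : 0 < n)
    (h : c * Real.sqrt n < n) (k : ℕ)
    (hk1 : ((n : ℝ) - c * Real.sqrt n) / 2 ≤ (k : ℝ))
    (hk2 : (k : ℝ) ≤ ((n : ℝ) + c * Real.sqrt n) / 2) :
    (n.choose k : ℝ) ≥ Real.exp (-1 - c ^ 2) * 2 ^ n / Real.sqrt n := by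
  have hsqrt : 1 ≤ √(n : ℝ) := one_le_sqrt.2 (by exact_mod_cast hn)
  have hkn : k ≤ n := by exact_mod_cast (show (k : ℝ) ≤ n by linarith)
  have hd : ((2 : ℝ) * k - n) ^ 2 ≤ c ^ 2 * n := by
    have hsq : ((2 : ℝ) * k - n) ^ 2 ≤ (c * √n) ^ 2 := sq_le_sq' (by linarith) (by linarith)
    rwa [mul_pow, sq_sqrt n.cast_nonneg] at hsq
  rw [ge_iff_le, div_le_iff₀ (by positivity)]
  rcases le_or_gt (4 * c ^ 2) (3 * (n : ℝ)) with hc | hc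
  · exact Nat.exp_neg_one_sub_sq_mul_two_pow_le_choose_mul_sqrt hn hkn hd hc
  · have hone : (1 : ℝ) ≤ n.choose k := by exact_mod_cast Nat.choose_pos hkn
    calc exp (-1 - c ^ 2) * 2 ^ n ≤ 1 * 1 := by
          rw [one_mul]; exact exp_neg_one_sub_sq_mul_two_pow_le_one hc.le
      _ ≤ n.choose k * √n := mul_le_mul hone hsqrt zero_le_one (by positivity)

/-- For a positive real `c` and a positive integer `n` with `c·√n < n`,
every natural `k` with `(n - c√n)/2 ≤ k ≤ (n + c√n)/2` satisfies
`C(n, k) ≥ e^{-1-c²} · 2^n / √n`. -/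
theorem central_binomial_lower_bound (c : ℝ) (n : ℕ) (hc : 0 < c) (hn : 0 < n)
    (h : c * Real.sqrt n < n) (k : ℕ)
    (hk1 : ((n : ℝ) - c * Real.sqrt n) / 2 ≤ (k : ℝ))
    (hk2 : (k : ℝ) ≤ ((n : ℝ) + c * Real.sqrt n) / 2) :
    (n.choose k : ℝ) ≥ Real.exp (-1 - c ^ 2) * 2 ^ n / Real.sqrt n :=
  central_binomial_lower_bound_general c n hn h k hk1 hk2
end

section
/- For every integer n ≥ 10, both of the following hold: (1/2^n) · Σ C(n,k) ≥ 2/5, where the sum is over all odd integers k with ⌈n/4⌉ ≤ k ≤ ⌊3n/4⌋; and (1/2^n) · Σ C(n,k) ≥ 2/5, where the sum is over all even integers k with ⌈n/4⌉ ≤ k ≤ ⌊3n/4⌋. -/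
lemma choose_mono_half {n : ℕ} : ∀ {a b : ℕ}, a ≤ b → 2 * b ≤ n → n.choose a ≤ n.choose b := by
  intro a b hab hb
  induction b with
  | zero => simp [Nat.le_zero.mp hab]
  | succ m ih =>
    rcases Nat.lt_or_ge a (m+1) with h | h
    · exact le_trans (ih (by omega) (by omega)) (Nat.choose_le_succ_of_lt_half_left (by omega))
    · have : a = m + 1 := by omega
      simp [this]

lemma choose_ratio_ge {n k c d : ℕ} (h : d * (k + 1) ≤ c * (n - k)) :
    d * n.choose k ≤ c * n.choose (k+1) := by
  have key : d * n.choose k * (k+1) ≤ c * n.choose (k+1) * (k+1) := by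
    calc d * n.choose k * (k+1) = n.choose k * (d * (k+1)) := by ring
      _ ≤ n.choose k * (c * (n - k)) := Nat.mul_le_mul_left _ h
      _ = c * (n.choose k * (n - k)) := by ring
      _ = c * (n.choose (k+1) * (k+1)) := by rw [Nat.choose_succ_right_eq]
      _ = c * n.choose (k+1) * (k+1) := by ring
  exact Nat.le_of_mul_le_mul_right key (by omega)

lemma choose_ratio_le {n k c d : ℕ} (h : c * (n - k) ≤ d * (k + 1)) :
    c * n.choose (k+1) ≤ d * n.choose k := by
  have key : c * n.choose (k+1) * (k+1) ≤ d * n.choose k * (k+1) := by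
    calc c * n.choose (k+1) * (k+1) = c * (n.choose (k+1) * (k+1)) := by ring
      _ = c * (n.choose k * (n - k)) := by rw [Nat.choose_succ_right_eq]
      _ = n.choose k * (c * (n - k)) := by ring
      _ ≤ n.choose k * (d * (k+1)) := Nat.mul_le_mul_left _ h
      _ = d * n.choose k * (k+1) := by ring
  exact Nat.le_of_mul_le_mul_right key (by omega)

lemma step4 {n j : ℕ} (h : 2 * (j + 3) ≤ n) :
    (n+4).choose (j+3) ≤ n.choose (j+3) + 4 * n.choose (j+2) + 11 * n.choose (j+1) := by
  have expand : (n+4).choose (j+3) =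
      (n+1).choose j + 3 * n.choose j + 6 * n.choose (j+1)
        + 4 * n.choose (j+2) + n.choose (j+3) := by
    simp [Nat.choose_succ_succ]
    ring
  have m1 : (n+1).choose j ≤ (n+1).choose (j+1) := choose_mono_half (by omega) (by omega)
  have m2 : (n+1).choose (j+1) = n.choose j + n.choose (j+1) := Nat.choose_succ_succ _ _
  have m3 : n.choose j ≤ n.choose (j+1) := choose_mono_half (by omega) (by omega)
  omega

lemma step16 {n j : ℕ} (h1 : 4*j + 9 ≤ n) (h2 : n ≤ 4*j + 12) :
    (n+4).choose (j+3) ≤ 16 * n.choose (j+2) := by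
  have hs := step4 (n := n) (j := j) (by omega)
  have r1 : 15 * n.choose (j+3) ≤ 50 * n.choose (j+2) := choose_ratio_le (by omega)
  have r2 : 165 * n.choose (j+1) ≤ 66 * n.choose (j+2) := choose_ratio_ge (by omega)
  omega

lemma key_bound : ∀ n, 10 ≤ n → 45 * n.choose ((n-1)/4) ≤ 2^(n+1) := by
  intro n
  induction n using Nat.strong_induction_on with
  | _ n ih =>
    intro hn
    rcases Nat.lt_or_ge n 14 with h | h
    · interval_cases n <;> decide
    · obtain ⟨m, rfl⟩ : ∃ m, n = m + 4 := ⟨n - 4, by omega⟩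
      obtain ⟨j, hj⟩ : ∃ j, (m-1)/4 = j + 2 := ⟨(m-1)/4 - 2, by omega⟩
      have hidx : (m + 4 - 1)/4 = j + 3 := by omega
      have ihm := ih m (by omega) (by omega)
      rw [hj] at ihm
      rw [hidx]
      calc 45 * (m+4).choose (j+3) ≤ 45 * (16 * m.choose (j+2)) :=
            Nat.mul_le_mul_left _ (step16 (by omega) (by omega))
        _ = 16 * (45 * m.choose (j+2)) := by ring
        _ ≤ 16 * 2^(m+1) := Nat.mul_le_mul_left _ ihm
        _ = 2^(m+4+1) := by ring

lemma parity_lower_le (m : ℕ) : ∀ n p : ℕ, 4 * m ≤ n + 1 →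
    8 * ∑ k ∈ (Finset.range (m+1)).filter (fun k => k % 2 = p), n.choose k
      ≤ 9 * n.choose m := by
  induction m using Nat.twoStepInduction with
  | zero =>
    intro n p _
    rw [Finset.sum_filter, Finset.sum_range_one]
    simp only [Nat.choose_zero_right]
    split <;> omega
  | one =>
    intro n p h
    rw [Finset.sum_filter, Finset.sum_range_succ, Finset.sum_range_one]
    simp only [Nat.choose_zero_right, Nat.choose_one_right]
    split <;> split <;> omega
  | more m ih _ =>
    intro n p h
    have step : ∑ k ∈ (Finset.range (m+3)).filter (fun k => k % 2 = p), n.choose k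
        = (∑ k ∈ (Finset.range (m+1)).filter (fun k => k % 2 = p), n.choose k)
          + ((if (m+1) % 2 = p then n.choose (m+1) else 0)
          + (if (m+2) % 2 = p then n.choose (m+2) else 0)) := by
      rw [Finset.sum_filter, Finset.sum_filter, Finset.sum_range_succ, Finset.sum_range_succ]
      ring
    have ihm := ih n p (by omega)
    have s1 : 3 * n.choose m ≤ 1 * n.choose (m+1) := choose_ratio_ge (by omega)
    have s2 : 3 * n.choose (m+1) ≤ 1 * n.choose (m+2) := choose_ratio_ge (by omega)
    rw [step]
    rcases eq_or_ne ((m+1) % 2) p with h1 | h1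
    · have h2 : (m+2) % 2 ≠ p := by omega
      rw [if_pos h1, if_neg h2]
      omega
    · rcases eq_or_ne ((m+2) % 2) p with h2 | h2
      · rw [if_neg h1, if_pos h2]
        omega
      · rw [if_neg h1, if_neg h2]
        omega


lemma parity_half (n p : ℕ) (hn : 1 ≤ n) (hp : p < 2) :
    2 * ∑ k ∈ Finset.range (n+1), (if k % 2 = p then n.choose k else 0) = 2^n := by
  have hEO : ∑ k ∈ Finset.range (n+1), (if k % 2 = 0 then n.choose k else 0)
      + ∑ k ∈ Finset.range (n+1), (if k % 2 = 1 then n.choose k else 0) = 2^n := by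
    rw [← Finset.sum_add_distrib, ← Nat.sum_range_choose n]
    refine Finset.sum_congr rfl fun k _ => ?_
    rcases Nat.even_or_odd k with h | h
    · simp [Nat.even_iff.mp h]
    · simp [Nat.odd_iff.mp h]
  have halt : ∑ k ∈ Finset.range (n+1), ((-1:ℤ))^k * (n.choose k : ℤ) = 0 := by
    rw [Int.alternating_sum_range_choose]
    simp [show n ≠ 0 by omega]
  have hsub : ((∑ k ∈ Finset.range (n+1), (if k % 2 = 0 then n.choose k else 0) : ℕ) : ℤ)
      - ((∑ k ∈ Finset.range (n+1), (if k % 2 = 1 then n.choose k else 0) : ℕ) : ℤ) = 0 := by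
    push_cast
    rw [← Finset.sum_sub_distrib]
    calc ∑ k ∈ Finset.range (n+1),
          ((if k % 2 = 0 then (n.choose k : ℤ) else 0) - (if k % 2 = 1 then (n.choose k : ℤ) else 0))
        = ∑ k ∈ Finset.range (n+1), ((-1:ℤ))^k * (n.choose k : ℤ) := by
          refine Finset.sum_congr rfl fun k _ => ?_
          rcases Nat.even_or_odd k with h | h
          · simp [Nat.even_iff.mp h, h.neg_one_pow]
          · simp [Nat.odd_iff.mp h, h.neg_one_pow]
      _ = 0 := halt
  interval_cases p <;> omega

lemma main_nat (n : ℕ) (hn : 10 ≤ n) (p : ℕ) (hp : p < 2) :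
    2^(n+1) ≤ 5 * ∑ k ∈ (Finset.Icc ((n+3)/4) (3*n/4)).filter (fun k => k % 2 = p),
      n.choose k := by
  set c := (n+3)/4 with hc
  set u := 3*n/4 with hu
  have hcu : c + u = n := by omega
  have hcle : c ≤ u + 1 := by omega
  have hun : u + 1 ≤ n + 1 := by omega
  set f : ℕ → ℕ := fun k => if k % 2 = p then n.choose k else 0 with hf
  -- the middle sum as an ite-sum over Ico
  have hmid : ∑ k ∈ (Finset.Icc c u).filter (fun k => k % 2 = p), n.choose k
      = ∑ k ∈ Finset.Ico c (u+1), f k := by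
    rw [Finset.sum_filter, Finset.Ico_add_one_right_eq_Icc]
  have hsplit : ∑ k ∈ Finset.Ico 0 c, f k + ∑ k ∈ Finset.Ico c (u+1), f k
      + ∑ k ∈ Finset.Ico (u+1) (n+1), f k = ∑ k ∈ Finset.range (n+1), f k := by
    rw [Finset.sum_Ico_consecutive f (Nat.zero_le c) hcle,
      Finset.sum_Ico_consecutive f (Nat.zero_le (u+1)) hun, Finset.range_eq_Ico]
  have hrefl : ∑ k ∈ Finset.Ico (u+1) (n+1), f k
      = ∑ k ∈ Finset.Ico 0 c, (if k % 2 = (n+p) % 2 then n.choose k else 0) := by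
    refine (Finset.sum_nbij' (fun k => n - k) (fun k => n - k) ?_ ?_ ?_ ?_ ?_).symm
    · intro a ha
      simp only [Finset.mem_Ico] at ha ⊢
      omega
    · intro a ha
      simp only [Finset.mem_Ico] at ha ⊢
      omega
    · intro a ha
      simp only [Finset.mem_Ico] at ha
      omega
    · intro a ha
      simp only [Finset.mem_Ico] at ha
      omega
    · intro a ha
      simp only [Finset.mem_Ico] at ha
      have h1 : a ≤ n := by omega
      have h2 : (a % 2 = (n+p) % 2) ↔ ((n - a) % 2 = p) := by omega
      simp only [hf, Nat.choose_symm h1, h2]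
  have htot : 2 * ∑ k ∈ Finset.range (n+1), f k = 2^n :=
    parity_half n p (by omega) hp
  -- lower tail bounds
  have hm : c = (n-1)/4 + 1 := by omega
  have hL : 8 * ∑ k ∈ Finset.Ico 0 c, f k ≤ 9 * n.choose ((n-1)/4) := by
    have := parity_lower_le ((n-1)/4) n p (by omega)
    rw [Finset.sum_filter] at this
    rw [← Finset.range_eq_Ico, hm]
    exact this
  have hL' : 8 * ∑ k ∈ Finset.Ico 0 c, (if k % 2 = (n+p) % 2 then n.choose k else 0)
      ≤ 9 * n.choose ((n-1)/4) := by
    have := parity_lower_le ((n-1)/4) n ((n+p) % 2) (by omega)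
    rw [Finset.sum_filter] at this
    rw [← Finset.range_eq_Ico, hm]
    exact this
  have hkey := key_bound n hn
  have hpow : 2^(n+1) = 2 * 2^n := by ring
  rw [hmid]
  omega


/-- For every integer `n ≥ 10`, the sums of `C(n,k)/2^n` over odd `k`,
respectively even `k`, with `⌈n/4⌉ ≤ k ≤ ⌊3n/4⌋`, are both at least `2/5`. -/
theorem binomial_parity_sums (n : ℕ) (hn : 10 ≤ n) :
    (1 / 2 ^ n : ℝ) *
        ∑ k ∈ (Finset.Icc ((n + 3) / 4) (3 * n / 4)).filter (fun k => Odd k),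
          (n.choose k : ℝ) ≥ 2 / 5 ∧
    (1 / 2 ^ n : ℝ) *
        ∑ k ∈ (Finset.Icc ((n + 3) / 4) (3 * n / 4)).filter (fun k => Even k),
          (n.choose k : ℝ) ≥ 2 / 5 := by
  have hfo : (Finset.Icc ((n + 3) / 4) (3 * n / 4)).filter (fun k => Odd k)
      = (Finset.Icc ((n + 3) / 4) (3 * n / 4)).filter (fun k => k % 2 = 1) := by
    apply Finset.filter_congr
    intro x _
    simp [Nat.odd_iff]
  have hfe : (Finset.Icc ((n + 3) / 4) (3 * n / 4)).filter (fun k => Even k)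
      = (Finset.Icc ((n + 3) / 4) (3 * n / 4)).filter (fun k => k % 2 = 0) := by
    apply Finset.filter_congr
    intro x _
    simp [Nat.even_iff]
  have hpow : (0:ℝ) < 2 ^ n := by positivity
  constructor
  · have h1 := main_nat n hn 1 (by omega)
    have h2 : (2:ℝ) * 2 ^ n ≤ 5 * ∑ k ∈ (Finset.Icc ((n + 3) / 4) (3 * n / 4)).filter
        (fun k => k % 2 = 1), (n.choose k : ℝ) := by
      push_cast
      calc (2:ℝ) * 2 ^ n = ((2^(n+1) : ℕ) : ℝ) := by push_cast; ring
        _ ≤ ((5 * ∑ k ∈ (Finset.Icc ((n + 3) / 4) (3 * n / 4)).filter (fun k => k % 2 = 1),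
              n.choose k : ℕ) : ℝ) := by exact_mod_cast h1
        _ = 5 * ∑ k ∈ (Finset.Icc ((n + 3) / 4) (3 * n / 4)).filter (fun k => k % 2 = 1),
              (n.choose k : ℝ) := by push_cast; ring
    rw [hfo, ge_iff_le, one_div, inv_mul_eq_div, le_div_iff₀ hpow]
    linarith
  · have h1 := main_nat n hn 0 (by omega)
    have h2 : (2:ℝ) * 2 ^ n ≤ 5 * ∑ k ∈ (Finset.Icc ((n + 3) / 4) (3 * n / 4)).filter
        (fun k => k % 2 = 0), (n.choose k : ℝ) := by
      push_cast
      calc (2:ℝ) * 2 ^ n = ((2^(n+1) : ℕ) : ℝ) := by push_cast; ring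
        _ ≤ ((5 * ∑ k ∈ (Finset.Icc ((n + 3) / 4) (3 * n / 4)).filter (fun k => k % 2 = 0),
              n.choose k : ℕ) : ℝ) := by exact_mod_cast h1
        _ = 5 * ∑ k ∈ (Finset.Icc ((n + 3) / 4) (3 * n / 4)).filter (fun k => k % 2 = 0),
              (n.choose k : ℝ) := by push_cast; ring
    rw [hfe, ge_iff_le, one_div, inv_mul_eq_div, le_div_iff₀ hpow]
    linarith
end

section
/- Let n, i, t be integers with 1 ≤ i ≤ n and t ≥ 2, and suppose that ⌊t/2⌋ + i − 1 and ⌈t/2⌉ + n − i are both even. Then (16·i·(n − i + 1)/t²) · C(⌊t/2⌋, (⌊t/2⌋ + i − 1)/2) · 2^{−⌊t/2⌋} · C(⌈t/2⌉, (⌈t/2⌉ + n − i)/2) · 2^{−⌈t/2⌉} ≤ 64·n²/t³. -/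
lemma aux_central (j : ℕ) : (2*j+1) * ((2*j).choose j)^2 ≤ 2 * 16^j := by
  induction j with
  | zero => norm_num
  | succ j ih =>
    have h : (j+1) * Nat.centralBinom (j+1) = 2 * (2*j+1) * Nat.centralBinom j :=
      Nat.succ_mul_centralBinom_succ j
    simp only [Nat.centralBinom] at h
    have hpos : 0 < (j+1)^2 := by positivity
    have hs : (j+1)^2 * ((2*(j+1)+1) * ((2*(j+1)).choose (j+1))^2)
        ≤ (j+1)^2 * (2 * 16^(j+1)) := by
      have e1 : (j+1)^2 * ((2*(j+1)+1) * ((2*(j+1)).choose (j+1))^2)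
          = (2*(j+1)+1) * ((j+1) * ((2*(j+1)).choose (j+1)))^2 := by ring
      rw [e1, h, show (16:ℕ)^(j+1) = 16*16^j from by ring]
      have hmul := Nat.mul_le_mul_left (4*(2*j+3)*(2*j+1)) ih
      nlinarith [hmul]
    exact Nat.le_of_mul_le_mul_left hs hpos

lemma aux_key (m k : ℕ) : (m+1) * (m.choose k)^2 ≤ 2 * 4^m := by
  have hle : m.choose k ≤ m.choose (m/2) := Nat.choose_le_middle k m
  have h2 : (m+1) * (m.choose (m/2))^2 ≤ 2*4^m := by
    rcases Nat.even_or_odd m with ⟨j, hj⟩ | ⟨j, hj⟩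
    · have hm : m = 2*j := by omega
      subst hm
      have hd : 2*j/2 = j := by omega
      rw [hd]
      have h4 : (4:ℕ)^(2*j) = 16^j := by rw [pow_mul]; norm_num
      rw [h4]
      exact aux_central j
    · have hm : m = 2*j+1 := by omega
      subst hm
      have hd : (2*j+1)/2 = j := by omega
      rw [hd]
      have hsymm : (2*j+1).choose (j+1) = (2*j+1).choose j := by
        have h := Nat.choose_symm (n := 2*j+1) (k := j+1) (by omega)
        rw [show 2*j+1-(j+1) = j from by omega] at h
        exact h.symm
      have hdbl : (2*(j+1)).choose (j+1) = 2 * ((2*j+1).choose j) := by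
        have h1 : (2*j+1+1).choose (j+1) = (2*j+1).choose j + (2*j+1).choose (j+1) :=
          Nat.choose_succ_succ (2*j+1) j
        have h2 : 2*(j+1) = 2*j+1+1 := by ring
        rw [h2, h1, hsymm]; ring
      have hc := aux_central (j+1)
      rw [hdbl, show (16:ℕ)^(j+1) = 16*16^j from by ring] at hc
      have h4 : (4:ℕ)^(2*j+1) = 4 * 16^j := by
        rw [pow_succ, pow_mul]; norm_num; ring
      rw [h4]
      nlinarith [hc]
  calc (m+1) * (m.choose k)^2 ≤ (m+1) * (m.choose (m/2))^2 :=
        Nat.mul_le_mul_left _ (Nat.pow_le_pow_left hle 2)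
    _ ≤ 2*4^m := h2

/-- For integers `1 ≤ i ≤ n` and `t ≥ 2` with `⌊t/2⌋ + i - 1` and
`⌈t/2⌉ + n - i` both even,
`(16·i·(n-i+1)/t²) · C(⌊t/2⌋, (⌊t/2⌋+i-1)/2) · 2^{-⌊t/2⌋} · C(⌈t/2⌉, (⌈t/2⌉+n-i)/2) · 2^{-⌈t/2⌉}
  ≤ 64·n²/t³`. -/
theorem binomial_product_upper_bound (n i t : ℕ) (hi1 : 1 ≤ i) (hi2 : i ≤ n)
    (ht : 2 ≤ t) (he1 : Even (t / 2 + i - 1)) (he2 : Even ((t + 1) / 2 + n - i)) :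
    16 * (i : ℝ) * ((n : ℝ) - (i : ℝ) + 1) / (t : ℝ) ^ 2 *
        ((t / 2).choose ((t / 2 + i - 1) / 2) : ℝ) * (1 / 2 ^ (t / 2)) *
        (((t + 1) / 2).choose (((t + 1) / 2 + n - i) / 2) : ℝ) *
        (1 / 2 ^ ((t + 1) / 2)) ≤
      64 * (n : ℝ) ^ 2 / (t : ℝ) ^ 3 := by
  set a := t / 2 with ha
  set b := (t + 1) / 2 with hb
  set k1 := (a + i - 1) / 2
  set k2 := (b + n - i) / 2
  have htn : 0 < t := by omega
  have ht0 : (0:ℝ) < t := by exact_mod_cast htn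
  set X : ℝ := (a.choose k1 : ℝ) / 2 ^ a with hX
  set Y : ℝ := (b.choose k2 : ℝ) / 2 ^ b with hY
  have hXnn : 0 ≤ X := by positivity
  have hYnn : 0 ≤ Y := by positivity
  -- squared bounds
  have sqbound : ∀ (m k : ℕ), ((m:ℝ)+1) * ((m.choose k : ℝ) / 2^m)^2 ≤ 2 := by
    intro m k
    have h := aux_key m k
    have hc : ((m:ℝ)+1) * (m.choose k : ℝ)^2 ≤ 2 * 4^m := by exact_mod_cast h
    have h4 : ((2:ℝ)^m)^2 = 4^m := by
      rw [← pow_mul, mul_comm, pow_mul]; norm_num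
    rw [div_pow, h4, ← mul_div_assoc, div_le_iff₀ (by positivity)]
    linarith
  have hX2 : ((a:ℝ)+1) * X^2 ≤ 2 := sqbound a k1
  have hY2 : ((b:ℝ)+1) * Y^2 ≤ 2 := sqbound b k2
  have h1 : (t:ℝ) ≤ 2*(a:ℝ)+1 := by
    have : t ≤ 2*a+1 := by omega
    exact_mod_cast this
  have h2 : (t:ℝ) ≤ 2*(b:ℝ) := by
    have : t ≤ 2*b := by omega
    exact_mod_cast this
  have hann : (0:ℝ) ≤ (a:ℝ)+1 := by positivity
  have hbnn : (0:ℝ) ≤ (b:ℝ)+1 := by positivity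
  -- product bound : X*Y*t ≤ 4
  have hprod : X * Y * (t:ℝ) ≤ 4 := by
    have hP : (((a:ℝ)+1) * X^2) * (((b:ℝ)+1) * Y^2) ≤ 2 * 2 :=
      mul_le_mul hX2 hY2 (by positivity) (by linarith [sq_nonneg X, mul_nonneg hann (sq_nonneg X)])
    have h4ab : (t:ℝ)^2 ≤ 4*(((a:ℝ)+1)*((b:ℝ)+1)) := by
      nlinarith [mul_le_mul h1 h2 (le_of_lt ht0) (by positivity : (0:ℝ) ≤ 2*(a:ℝ)+1)]
    have hsq : (X*Y*(t:ℝ))^2 ≤ 16 := by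
      nlinarith [mul_le_mul_of_nonneg_right h4ab (mul_nonneg (sq_nonneg X) (sq_nonneg Y)), hP]
    nlinarith [hsq, mul_nonneg (mul_nonneg hXnn hYnn) (le_of_lt ht0)]
  have hXY : X * Y ≤ 4 / (t:ℝ) := by
    rw [le_div_iff₀ ht0]
    exact hprod
  have hin : (i:ℝ) ≤ (n:ℝ) := by exact_mod_cast hi2
  have hni : (n:ℝ) - (i:ℝ) + 1 ≤ (n:ℝ) := by
    have : (1:ℝ) ≤ (i:ℝ) := by exact_mod_cast hi1
    linarith
  have hnn : (0:ℝ) ≤ (n:ℝ) := by positivity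
  calc 16 * (i : ℝ) * ((n : ℝ) - (i : ℝ) + 1) / (t : ℝ) ^ 2 *
        (a.choose k1 : ℝ) * (1 / 2 ^ a) * (b.choose k2 : ℝ) * (1 / 2 ^ b)
      = 16 * (i:ℝ) * ((n:ℝ) - (i:ℝ) + 1) * (X * Y) / (t:ℝ)^2 := by
        rw [hX, hY]; ring
    _ ≤ 16 * (n:ℝ) * (n:ℝ) * (4/(t:ℝ)) / (t:ℝ)^2 := by
        gcongr
        all_goals first | positivity | linarith
    _ = 64 * (n:ℝ)^2 / (t:ℝ)^3 := by
        field_simp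
        ring
end
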